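/- Let t₀ = (1/2)(5 + 3√3 - √(44 + 26√3)). Then t₀ is a root of the quartic (1+t²)² - 2t(1+5t²) = 0, the quartic has exactly two real roots, the other real root exceeds 1, and (1+t²)² - 2t(1+5t²) < 0 for all t ∈ (t₀, 1]. -/
import Mathlib


noncomputable def q (t : ℝ) : ℝ := (1+t^2)^2 - 2*t*(1+5*t^2)

noncomputable def t₀ : ℝ := (1/2) * (5 + 3*Real.sqrt 3 - Real.sqrt (44 + 26*Real.sqrt 3))

theorem stmt_6 :
    q t₀ = 0 ∧
    (∃ t₁ : ℝ, q t₁ = 0 ∧ 1 < t₁ ∧ t₀ ≠ t₁ ∧ ∀ t : ℝ, q t = 0 → t = t₀ ∨ t = t₁) ∧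
    (∀ t ∈ Set.Ioc t₀ 1, q t < 0) := by
  set s : ℝ := Real.sqrt 3 with hs_def
  set r : ℝ := Real.sqrt (44 + 26*s) with hr_def
  have hs0 : (0:ℝ) ≤ s := Real.sqrt_nonneg 3
  have hs : s^2 = 3 := Real.sq_sqrt (by norm_num)
  have hrarg : (0:ℝ) < 44 + 26*s := by nlinarith
  have hr : r^2 = 44 + 26*s := Real.sq_sqrt (le_of_lt hrarg)
  have hr0 : 0 < r := Real.sqrt_pos.mpr hrarg
  set t₁ : ℝ := (1/2) * (5 + 3*s + r) with ht1_def
  have ht0 : t₀ = (1/2) * (5 + 3*s - r) := rfl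
  -- the second quadratic factor is always positive
  have hpos : ∀ t : ℝ, 0 < t^2 + (3*s-5)*t + (2-s) := by
    intro t
    nlinarith [sq_nonneg (t + (3*s-5)/2), sq_nonneg (s - 22/13)]
  -- factorization of q
  have hfac : ∀ t : ℝ, q t = (t - t₀) * (t - t₁) * (t^2 + (3*s-5)*t + (2-s)) := by
    intro t
    have h1 : q t = (t^2 - (5+3*s)*t + (2+s)) * (t^2 + (3*s-5)*t + (2-s)) := by
      unfold q
      linear_combination (9*t^2 - 6*t + 1) * hs
    have h2 : t^2 - (5+3*s)*t + (2+s) = (t - t₀) * (t - t₁) := by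
      rw [ht0, ht1_def]
      linear_combination (-(9:ℝ)/4) * hs + (1/4) * hr
    rw [h1, h2]
  have h01 : t₀ < t₁ := by rw [ht0, ht1_def]; nlinarith
  refine ⟨?_, ⟨t₁, ?_, ?_, ?_, ?_⟩, ?_⟩
  · rw [hfac t₀]; ring
  · rw [hfac t₁]; ring
  · rw [ht1_def]; nlinarith
  · exact ne_of_lt h01
  · intro t ht
    rw [hfac t] at ht
    rcases mul_eq_zero.mp ht with h | h
    · rcases mul_eq_zero.mp h with h' | h'
      · left; linarith [sub_eq_zero.mp h']
      · right; linarith [sub_eq_zero.mp h']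
    · exact absurd h (ne_of_gt (hpos t))
  · intro t ht
    have h1 : 0 < t - t₀ := sub_pos.mpr ht.1
    have h2 : t - t₁ < 0 := by
      have : (1:ℝ) < t₁ := by rw [ht1_def]; nlinarith
      linarith [ht.2]
    rw [hfac t]
    exact mul_neg_of_neg_of_pos (mul_neg_of_pos_of_neg h1 h2) (hpos t)
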